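/- arXiv:1409.2457 — 2 statements merged into one kernel-verified Lean document; each statement's English description precedes it below -/
import Mathlib

section
/- (Completeness of the reduction for weighted CPS-3F.) With the same construction as in the soundness direction (a_{2i-1} = (i,1) with weight s_i, a_{2i} = (i+0.2, 1) with weight 0, b_{2i-1} = (i, 0) with weight 0, b_{2i} = (i+0.2, 0) with weight s_i), if there exist subsequences A' of A and B' of B with C(A') ≤ 𝔖/2, C(B') ≤ 𝔖/2, d_dF(A,A') ≤ 0.2, d_dF(B,B') ≤ 0.2, and d_dF(A',B') ≤ 1, then {s_1,...,s_n} can be partitioned into two sets each summing to 𝔖/2. -/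
/-!
Each vertex `a_{2i-1} = (i, 1)` of `A` is matched, in a coupling of `A` with `A'` of cost about
`0.2`, to a vertex of `A'`; the only candidates are `a_{2i-1}` itself and `a_{2i} = (i + 0.2, 1)`.
In the second case `a_{2i}` is matched, in a coupling of `A'` with `B'` of cost about `1`, to a
vertex of `B'`, and the only vertex of `B` that close is `b_{2i} = (i + 0.2, 0)`. So every weight
`s_i` is carried by `A'` (through `a_{2i-1}`) or by `B'` (through `b_{2i}`). Both carry at most
`𝔖/2`, hence the indices of the `a_{2i-1}` kept in `A'` have total weight exactly `𝔖/2`.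
-/

/-- One step of a monotone coupling on 0-based index pairs:
each index advances by 0 or 1, and at least one advances. -/
def StepN (p q : ℕ × ℕ) : Prop :=
  p.1 ≤ q.1 ∧ q.1 ≤ p.1 + 1 ∧ p.2 ≤ q.2 ∧ q.2 ≤ p.2 + 1 ∧ p ≠ q

/-- A coupling of sequences of lengths `la` and `lb`: starts at `(0,0)`,
ends at `(la-1, lb-1)`, and advances by `StepN`. -/
def IsCouplingL (la lb : ℕ) (c : List (ℕ × ℕ)) : Prop :=
  c.head? = some (0, 0) ∧ c.getLast? = some (la - 1, lb - 1) ∧ c.Chain' StepN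

/-- The maximal pointwise distance along a coupling. -/
noncomputable def costL {X : Type*} [MetricSpace X] [Inhabited X]
    (P Q : List X) (c : List (ℕ × ℕ)) : ℝ :=
  (c.map (fun p => dist (P.getD p.1 default) (Q.getD p.2 default))).foldr max 0

/-- The discrete Fréchet distance of two finite sequences (lists) of points. -/
noncomputable def dFL {X : Type*} [MetricSpace X] [Inhabited X] (P Q : List X) : ℝ :=
  sInf { r | ∃ c, IsCouplingL P.length Q.length c ∧ costL P Q c = r }

abbrev Pt := EuclideanSpace ℝ (Fin 2)

noncomputable def pt (x y : ℝ) : Pt := WithLp.toLp 2 ![x, y]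

/-- The weighted chain `A`: `a_{2i-1} = (i,1)` with weight `s_i`,
`a_{2i} = (i+0.2,1)` with weight `0` (here `i` runs 0-based). -/
noncomputable def chainA (n : ℕ) (s : Fin n → ℕ) : List (Pt × ℕ) :=
  (List.finRange n).flatMap
    (fun (i : Fin n) => [(pt ((i : ℝ) + 1) 1, s i), (pt ((i : ℝ) + 1 + 0.2) 1, 0)])

/-- The weighted chain `B`: `b_{2i-1} = (i,0)` with weight `0`,
`b_{2i} = (i+0.2,0)` with weight `s_i`. -/
noncomputable def chainB (n : ℕ) (s : Fin n → ℕ) : List (Pt × ℕ) :=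
  (List.finRange n).flatMap
    (fun (i : Fin n) => [(pt ((i : ℝ) + 1) 0, 0), (pt ((i : ℝ) + 1 + 0.2) 0, s i)])

/-- Total weight of a weighted chain. -/
def wt (L : List (Pt × ℕ)) : ℕ := (L.map Prod.snd).sum


section DiscreteFrechet

variable {X : Type*} [MetricSpace X] [Inhabited X]

lemma le_foldr_max_of_mem {l : List ℝ} {a : ℝ} (h : a ∈ l) : a ≤ l.foldr max 0 := by
  induction l with
  | nil => simp at h
  | cons b t ih =>
    rcases List.mem_cons.1 h with rfl | h
    · exact le_max_left _ _
    · exact (ih h).trans (le_max_right _ _)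

lemma exists_isCouplingL (la lb : ℕ) : ∃ c, IsCouplingL la lb c := by
  set m := max (la - 1) (lb - 1)
  refine ⟨(List.range (m + 1)).map fun k => (min k (la - 1), min k (lb - 1)), ?_, ?_, ?_⟩
  · simp [List.range_succ_eq_map]
  · rw [List.getLast?_map, List.getLast?_range, if_neg (by omega)]
    simp only [Option.map_some, Nat.add_sub_cancel]
    congr 2 <;> omega
  · rw [List.Chain', List.isChain_map, List.isChain_range_succ]
    intro k hk
    refine ⟨by omega, by omega, by omega, by omega, ?_⟩
    simp only [ne_eq, Prod.mk.injEq, not_and]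
    omega

lemma exists_mem_fst_eq_of_isChain {c : List (ℕ × ℕ)} (hc : c.IsChain StepN) :
    ∀ {p q : ℕ × ℕ}, c.head? = some p → c.getLast? = some q →
      ∀ k, p.1 ≤ k → k ≤ q.1 → ∃ r ∈ c, r.1 = k := by
  induction c with
  | nil => simp
  | cons a t ih =>
    intro p q hp hq k hpk hkq
    obtain rfl : a = p := by simpa using hp
    cases t with
    | nil =>
      obtain rfl : a = q := by simpa using hq
      exact ⟨a, List.mem_singleton_self a, by omega⟩
    | cons b t =>
      obtain ⟨hab, hbt⟩ := List.isChain_cons_cons.1 hc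
      rw [List.getLast?_cons_cons] at hq
      rcases hpk.eq_or_lt with rfl | hlt
      · exact ⟨a, List.mem_cons_self, rfl⟩
      · obtain ⟨r, hr, rfl⟩ := ih hbt rfl hq k (by have := hab.2.1; omega) hkq
        exact ⟨r, List.mem_cons_of_mem _ hr, rfl⟩

lemma exists_dist_le_costL {P Q : List X} {c : List (ℕ × ℕ)}
    (hc : IsCouplingL P.length Q.length c) {x : X} (hx : x ∈ P) :
    ∃ y, (y ∈ Q ∨ y = default) ∧ dist x y ≤ costL P Q c := by
  obtain ⟨k, hk, rfl⟩ := List.mem_iff_getElem.1 hx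
  obtain ⟨r, hr, rfl⟩ := exists_mem_fst_eq_of_isChain hc.2.2 hc.1 hc.2.1 k
    (Nat.zero_le _) (by simp only; omega)
  refine ⟨Q.getD r.2 default, ?_, ?_⟩
  · by_cases hq : r.2 < Q.length
    · exact .inl (List.getD_eq_getElem _ _ hq ▸ List.getElem_mem _)
    · exact .inr (List.getD_eq_default _ _ (not_lt.1 hq))
  · rw [← List.getD_eq_getElem _ default hk]
    exact le_foldr_max_of_mem (List.mem_map_of_mem hr)

-- `y = default` occurs only for `Q = []`, as the junk value of `Q.getD`.
lemma exists_dist_lt_of_dFL_lt {P Q : List X} {r : ℝ} (h : dFL P Q < r) {x : X} (hx : x ∈ P) :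
    ∃ y, (y ∈ Q ∨ y = default) ∧ dist x y < r := by
  obtain ⟨c, hc⟩ := exists_isCouplingL P.length Q.length
  obtain ⟨_, ⟨c, hc, rfl⟩, hlt⟩ := exists_lt_of_csInf_lt (by exact ⟨_, c, hc, rfl⟩) h
  obtain ⟨y, hy, hxy⟩ := exists_dist_le_costL hc hx
  exact ⟨y, hy, hxy.trans_lt hlt⟩

end DiscreteFrechet

lemma dist_pt_sq (a b c d : ℝ) : dist (pt a b) (pt c d) ^ 2 = (a - c) ^ 2 + (b - d) ^ 2 := by
  rw [EuclideanSpace.dist_eq, Real.sq_sqrt (by positivity)]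
  simp [pt, Fin.sum_univ_two, Real.dist_eq, sq_abs]

lemma default_eq_pt : (default : Pt) = pt 0 0 := by
  ext i; fin_cases i <;> rfl

lemma pt_inj {a b c d : ℝ} : pt a b = pt c d ↔ a = c ∧ b = d := by
  refine ⟨fun h => ⟨?_, ?_⟩, fun h => h.1 ▸ h.2 ▸ rfl⟩
  · simpa [pt] using congrArg (· 0) h
  · simpa [pt] using congrArg (· 1) h

lemma Nat.eq_of_abs_sub_sub_lt {i j : ℕ} {δ ε : ℝ} (h : |(i : ℝ) - j - δ| < ε)
    (hδε : |δ| + ε ≤ 1) : i = j := by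
  by_contra hij
  have h1 : (1 : ℝ) ≤ |(i : ℝ) - j| := by
    have : (1 : ℤ) ≤ |(i : ℤ) - j| := Int.one_le_abs (by omega)
    exact_mod_cast this
  have := abs_sub_abs_le_abs_sub ((i : ℝ) - j) δ
  linarith

lemma Nat.cast_add_ne {δ : ℝ} (hδ₀ : 0 < δ) (hδ₁ : δ < 1) (i j : ℕ) : (i : ℝ) + δ ≠ j := by
  intro h
  obtain rfl : i = j := Nat.eq_of_abs_sub_sub_lt (δ := -δ) (ε := 1 - δ)
    (by rw [← h]; simpa using hδ₁) (by rw [abs_neg, abs_of_pos hδ₀]; linarith)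
  linarith

lemma pt_ne_default {a b : ℝ} (ha : a ≠ 0) : pt a b ≠ default :=
  fun h => ha (pt_inj.1 (h.trans default_eq_pt)).1

lemma sq_add_sq_lt_of_dist_pt_lt {a b c d r : ℝ} (h : dist (pt a b) (pt c d) < r) :
    (a - c) ^ 2 + (b - d) ^ 2 < r ^ 2 := by
  rw [← dist_pt_sq]
  exact pow_lt_pow_left₀ h dist_nonneg two_ne_zero

lemma nodup_flatMap_finRange_pair {n : ℕ} (y : ℝ) (u v : Fin n → ℕ) :
    ((List.finRange n).flatMap fun i : Fin n =>
      [(pt ((i : ℝ) + 1) y, u i), (pt ((i : ℝ) + 1 + 0.2) y, v i)]).Nodup := by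
  refine List.Pairwise.imp (R := fun p q : Pt × ℕ => p.1 0 < q.1 0)
    (fun h he => h.ne (congrArg (fun p : Pt × ℕ => p.1 0) he)) ?_
  rw [List.pairwise_flatMap]
  refine ⟨fun i _ => by norm_num [pt], (List.pairwise_lt_finRange n).imp_of_mem ?_⟩
  intro i j _ _ hij p hp q hq
  have hij' : ((i : ℕ) : ℝ) + 1 ≤ (j : ℕ) := by exact_mod_cast hij
  simp only [List.mem_cons, List.not_mem_nil, or_false] at hp hq
  rcases hp with rfl | rfl <;> rcases hq with rfl | rfl <;>
    simp only [pt, Fin.isValue, Matrix.cons_val_zero] <;> linarith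

lemma Finset.sum_comp_le_sum_map_of_nodup {ι β M : Type*} [AddCommMonoid M] [PartialOrder M]
    [CanonicallyOrderedAdd M] {L : List β} (hL : L.Nodup) (T : Finset ι) {φ : ι → β}
    (hφ : Set.InjOn φ T) (hT : ∀ i ∈ T, φ i ∈ L) (f : β → M) :
    ∑ i ∈ T, f (φ i) ≤ (L.map f).sum := by
  classical
  rw [← Finset.sum_image hφ, ← List.sum_toFinset f hL]
  exact Finset.sum_le_sum_of_subset fun x hx => by
    obtain ⟨i, hi, rfl⟩ := Finset.mem_image.1 hx
    exact List.mem_toFinset.2 (hT i hi)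

lemma Finset.sum_eq_and_sum_compl_eq_of_cover {ι : Type*} [Fintype ι] [DecidableEq ι]
    {f : ι → ℕ} {h : ℕ} (hf : ∑ i, f i = 2 * h) {T U : Finset ι} (hTU : ∀ i, i ∈ T ∨ i ∈ U)
    (hT : ∑ i ∈ T, f i ≤ h) (hU : ∑ i ∈ U, f i ≤ h) :
    ∑ i ∈ T, f i = h ∧ ∑ i ∈ Tᶜ, f i = h := by
  have hTc : ∑ i ∈ Tᶜ, f i ≤ ∑ i ∈ U, f i :=
    Finset.sum_le_sum_of_subset fun i hi => (hTU i).resolve_left (Finset.mem_compl.1 hi)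
  have := Finset.sum_add_sum_compl T f
  omega

lemma sum_le_wt_of_sublist {ι : Type*} [Fintype ι] {L M : List (Pt × ℕ)} (hL : L.Sublist M)
    (hM : M.Nodup) {φ : ι → Pt × ℕ} (hφ : Function.Injective φ) [DecidablePred (φ · ∈ L)] :
    ∑ i with φ i ∈ L, (φ i).2 ≤ wt L :=
  Finset.sum_comp_le_sum_map_of_nodup (hL.nodup hM) _ hφ.injOn
    (fun _ hi => (Finset.mem_filter.1 hi).2) Prod.snd

section Reduction

variable {n : ℕ} {s : Fin n → ℕ}

lemma nodup_chainA : (chainA n s).Nodup := nodup_flatMap_finRange_pair 1 s 0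

lemma nodup_chainB : (chainB n s).Nodup := nodup_flatMap_finRange_pair 0 0 s

lemma mem_chainA {x : Pt × ℕ} (hx : x ∈ chainA n s) :
    ∃ i : Fin n, x = (pt ((i : ℝ) + 1) 1, s i) ∨ x = (pt ((i : ℝ) + 1 + 0.2) 1, 0) := by
  simpa [chainA] using hx

lemma mem_chainB {x : Pt × ℕ} (hx : x ∈ chainB n s) :
    ∃ i : Fin n, x = (pt ((i : ℝ) + 1) 0, 0) ∨ x = (pt ((i : ℝ) + 1 + 0.2) 0, s i) := by
  simpa [chainB] using hx

lemma mk_mem_chainA (i : Fin n) : (pt ((i : ℝ) + 1) 1, s i) ∈ chainA n s := by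
  simp only [chainA, List.mem_flatMap]
  exact ⟨i, List.mem_finRange i, by simp⟩

lemma mem_of_sublist_chainA {A' : List (Pt × ℕ)} (hA' : A'.Sublist (chainA n s)) {i : Fin n}
    (hi : pt ((i : ℝ) + 1) 1 ∈ A'.map Prod.fst) : (pt ((i : ℝ) + 1) 1, s i) ∈ A' := by
  obtain ⟨x, hx, hxi⟩ := List.mem_map.1 hi
  obtain ⟨j, rfl | rfl⟩ := mem_chainA (hA'.subset hx) <;> simp only [pt_inj] at hxi
  · obtain rfl : j = i := Fin.ext (by exact_mod_cast (add_right_cancel hxi.1))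
    exact hx
  · exact absurd (by linarith [hxi.1]) (Nat.cast_add_ne (δ := 0.2) (by norm_num) (by norm_num) j i)

lemma mem_of_sublist_chainB {B' : List (Pt × ℕ)} (hB' : B'.Sublist (chainB n s)) {i : Fin n}
    (hi : pt ((i : ℝ) + 1 + 0.2) 0 ∈ B'.map Prod.fst) : (pt ((i : ℝ) + 1 + 0.2) 0, s i) ∈ B' := by
  obtain ⟨x, hx, hxi⟩ := List.mem_map.1 hi
  obtain ⟨j, rfl | rfl⟩ := mem_chainB (hB'.subset hx) <;> simp only [pt_inj] at hxi
  · exact absurd (by linarith [hxi.1]) (Nat.cast_add_ne (δ := 0.2) (by norm_num) (by norm_num) i j)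
  · obtain rfl : j = i := Fin.ext (by exact_mod_cast (by linarith [hxi.1] : (j : ℝ) = i))
    exact hx

lemma eq_of_dist_lt_of_mem_chainA {i : Fin n} {y : Pt}
    (hy : y ∈ (chainA n s).map Prod.fst ∨ y = default) (hd : dist (pt ((i : ℝ) + 1) 1) y < 0.21) :
    y = pt ((i : ℝ) + 1) 1 ∨ y = pt ((i : ℝ) + 1 + 0.2) 1 := by
  rcases hy with hy | rfl
  · obtain ⟨x, hx, rfl⟩ := List.mem_map.1 hy
    obtain ⟨j, rfl | rfl⟩ := mem_chainA hx <;> have hsq := sq_add_sq_lt_of_dist_pt_lt hd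
    · left
      obtain rfl : i = j := Fin.ext <| Nat.eq_of_abs_sub_sub_lt (δ := 0) (ε := 0.21)
        (abs_lt_of_sq_lt_sq (by linarith) (by norm_num)) (by norm_num)
      rfl
    · right
      obtain rfl : i = j := Fin.ext <| Nat.eq_of_abs_sub_sub_lt (δ := 0.2) (ε := 0.21)
        (abs_lt_of_sq_lt_sq (by linarith) (by norm_num)) (by norm_num)
      rfl
  · rw [default_eq_pt] at hd
    nlinarith [sq_add_sq_lt_of_dist_pt_lt hd, (i : ℕ).cast_nonneg (α := ℝ)]

lemma eq_of_dist_lt_of_mem_chainB {i : Fin n} {z : Pt}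
    (hz : z ∈ (chainB n s).map Prod.fst ∨ z = default)
    (hd : dist (pt ((i : ℝ) + 1 + 0.2) 1) z < 1.01) : z = pt ((i : ℝ) + 1 + 0.2) 0 := by
  rcases hz with hz | rfl
  · obtain ⟨x, hx, rfl⟩ := List.mem_map.1 hz
    obtain ⟨j, rfl | rfl⟩ := mem_chainB hx <;> have hsq := sq_add_sq_lt_of_dist_pt_lt hd
    · have hij : (i : ℕ) = j := Nat.eq_of_abs_sub_sub_lt (δ := -0.2) (ε := 0.2)
        (abs_lt_of_sq_lt_sq (by linarith) (by norm_num)) (by norm_num [abs_of_neg])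
      rw [hij] at hsq
      norm_num at hsq
    · obtain rfl : i = j := Fin.ext <| Nat.eq_of_abs_sub_sub_lt (δ := 0) (ε := 0.2)
        (abs_lt_of_sq_lt_sq (by linarith) (by norm_num)) (by norm_num)
      rfl
  · rw [default_eq_pt] at hd
    nlinarith [sq_add_sq_lt_of_dist_pt_lt hd, (i : ℕ).cast_nonneg (α := ℝ)]

lemma mem_or_mem_of_dFL_le {A' B' : List (Pt × ℕ)}
    (hA' : A'.Sublist (chainA n s)) (hB' : B'.Sublist (chainB n s))
    (hd1 : dFL ((chainA n s).map Prod.fst) (A'.map Prod.fst) ≤ 0.2)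
    (hd3 : dFL (A'.map Prod.fst) (B'.map Prod.fst) ≤ 1) (i : Fin n) :
    (pt ((i : ℝ) + 1) 1, s i) ∈ A' ∨ (pt ((i : ℝ) + 1 + 0.2) 0, s i) ∈ B' := by
  -- The infimum `dFL` need not be attained, so we only get couplings of cost `0.2 + ε`, `1 + ε`;
  -- any `ε < √1.04 - 1` still keeps `(i + 1, 0)` away from `(i + 1.2, 1)`.
  obtain ⟨y, hy, hdy⟩ := exists_dist_lt_of_dFL_lt (hd1.trans_lt (by norm_num : (0.2 : ℝ) < 0.21))
    (List.mem_map_of_mem (f := Prod.fst) (mk_mem_chainA (s := s) i))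
  have hyA := hy.imp_left fun h => (hA'.map Prod.fst).subset h
  rcases eq_of_dist_lt_of_mem_chainA hyA hdy with rfl | rfl
  · exact .inl (mem_of_sublist_chainA hA' (hy.resolve_right (pt_ne_default (by positivity))))
  · obtain ⟨z, hz, hdz⟩ := exists_dist_lt_of_dFL_lt (hd3.trans_lt (by norm_num : (1 : ℝ) < 1.01))
      (hy.resolve_right (pt_ne_default (by positivity)))
    obtain rfl := eq_of_dist_lt_of_mem_chainB (hz.imp_left fun h => (hB'.map Prod.fst).subset h) hdz
    exact .inr (mem_of_sublist_chainB hB' (hz.resolve_right (pt_ne_default (by positivity))))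

end Reduction

theorem wcps_reduction_complete_general (n : ℕ) (s : Fin n → ℕ)
    (h : ℕ) (hT : ∑ i, s i = 2 * h)
    (A' B' : List (Pt × ℕ))
    (hA' : A'.Sublist (chainA n s)) (hB' : B'.Sublist (chainB n s))
    (hwA : wt A' ≤ h) (hwB : wt B' ≤ h)
    (hd1 : dFL ((chainA n s).map Prod.fst) (A'.map Prod.fst) ≤ 0.2)
    (hd3 : dFL (A'.map Prod.fst) (B'.map Prod.fst) ≤ 1) :
    ∃ SA : Finset (Fin n), ∑ i ∈ SA, s i = h ∧ ∑ i ∈ SAᶜ, s i = h := by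
  classical
  have hinjA : Function.Injective fun i : Fin n => (pt ((i : ℝ) + 1) 1, s i) :=
    fun i j hij => Fin.ext (by simpa using (pt_inj.1 (congrArg Prod.fst hij)).1)
  have hinjB : Function.Injective fun i : Fin n => (pt ((i : ℝ) + 1 + 0.2) 0, s i) :=
    fun i j hij => Fin.ext (by simpa using (pt_inj.1 (congrArg Prod.fst hij)).1)
  have hcover := mem_or_mem_of_dFL_le hA' hB' hd1 hd3
  refine ⟨_, Finset.sum_eq_and_sum_compl_eq_of_cover hT (fun i => by simpa using hcover i)
    ((sum_le_wt_of_sublist hA' nodup_chainA hinjA).trans hwA)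
    ((sum_le_wt_of_sublist hB' nodup_chainB hinjB).trans hwB)⟩

/-- Completeness of the reduction: if suitable simplifications `A'`, `B'` exist,
then the set partitions into two halves of equal sum. -/
theorem wcps_reduction_complete (n : ℕ) (s : Fin n → ℕ) (hs : ∀ i, 0 < s i)
    (h : ℕ) (hT : ∑ i, s i = 2 * h)
    (A' B' : List (Pt × ℕ))
    (hA' : A'.Sublist (chainA n s)) (hB' : B'.Sublist (chainB n s))
    (hAne : A' ≠ []) (hBne : B' ≠ [])
    (hwA : wt A' ≤ h) (hwB : wt B' ≤ h)
    (hd1 : dFL ((chainA n s).map Prod.fst) (A'.map Prod.fst) ≤ 0.2)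
    (hd2 : dFL ((chainB n s).map Prod.fst) (B'.map Prod.fst) ≤ 0.2)
    (hd3 : dFL (A'.map Prod.fst) (B'.map Prod.fst) ≤ 1) :
    ∃ SA : Finset (Fin n), ∑ i ∈ SA, s i = h ∧ ∑ i ∈ SAᶜ, s i = h :=
  wcps_reduction_complete_general n s h hT A' B' hA' hB' hwA hwB hd1 hd3
end

section
/- (Correctness of the 1-sided CPS-3F graph formulation.) Let A = (a_1,...,a_m) and B = (b_1,...,b_n) be chains in a metric space and δ_1, δ_3 > 0. Define the directed graph G with vertex set { (i,p,j) : d(a_i, a_p) ≤ δ_1 and d(a_p, b_j) ≤ δ_3 } and edges from (i,p,j) to (i',p',j') iff i ≤ i' ≤ i+1, p ≤ p', j ≤ j' ≤ j+1, and the tuples are distinct. Then there exists a subsequence A' of A with |A'| ≤ k, d_dF(A, A') ≤ δ_1, and d_dF(A', B) ≤ δ_3 if and only if there exist a starting configuration s = (1, p_0, 1) and final configuration t = (m, p_1, n) in G and a directed path from s to t along which the second coordinate strictly increases at most k − 1 times. -/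
/-- A possible configuration `(i,p,j)` (1-based) of the 1-sided problem. -/
def Ok3 {X : Type*} [MetricSpace X] [Inhabited X] (A B : List X)
    (δ1 δ3 : ℝ) (v : ℕ × ℕ × ℕ) : Prop :=
  1 ≤ v.1 ∧ v.1 ≤ A.length ∧ 1 ≤ v.2.1 ∧ v.2.1 ≤ A.length ∧
  1 ≤ v.2.2 ∧ v.2.2 ≤ B.length ∧
  dist (A.getD (v.1 - 1) default) (A.getD (v.2.1 - 1) default) ≤ δ1 ∧
  dist (A.getD (v.2.1 - 1) default) (B.getD (v.2.2 - 1) default) ≤ δ3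

/-- An edge of the 1-sided configuration graph: `i ≤ i' ≤ i+1`, `p ≤ p'`,
`j ≤ j' ≤ j+1`, distinct configurations, both possible. -/
def Edge3 {X : Type*} [MetricSpace X] [Inhabited X] (A B : List X)
    (δ1 δ3 : ℝ) (v w : ℕ × ℕ × ℕ) : Prop :=
  Ok3 A B δ1 δ3 v ∧ Ok3 A B δ1 δ3 w ∧
  v.1 ≤ w.1 ∧ w.1 ≤ v.1 + 1 ∧ v.2.1 ≤ w.2.1 ∧
  v.2.2 ≤ w.2.2 ∧ w.2.2 ≤ v.2.2 + 1 ∧ v ≠ w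

theorem List.foldr_max_le_iff {α : Type*} [LinearOrder α] {l : List α} {b a : α} :
    l.foldr max b ≤ a ↔ b ≤ a ∧ ∀ x ∈ l, x ≤ a := by
  induction l with
  | nil => simp
  | cons y l ih => simp only [List.foldr_cons, max_le_iff, ih, List.forall_mem_cons]; tauto

theorem List.foldr_max_eq_or_mem {α : Type*} [LinearOrder α] (l : List α) (b : α) :
    l.foldr max b = b ∨ l.foldr max b ∈ l := by
  induction l with
  | nil => simp
  | cons y l ih =>
    rcases max_choice y (l.foldr max b) with h | h <;> simp only [List.foldr_cons, h]
    · simp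
    · rcases ih with ih | ih <;> simp [ih]

theorem List.getD_eq_default_or_mem {α : Type*} (l : List α) (i : ℕ) (d : α) :
    l.getD i d = d ∨ l.getD i d ∈ l := by
  rw [List.getD_eq_getElem?_getD]
  cases h : l[i]? with
  | none => simp
  | some x => exact Or.inr (List.mem_of_getElem? h)

theorem List.le_foldr_max {α : Type*} [LinearOrder α] (l : List α) (b : α) : b ≤ l.foldr max b := by
  induction l with
  | nil => exact le_rfl
  | cons y l ih => exact le_max_of_le_right ih

theorem List.getD_cons_sublist_drop {α : Type*} {l rest : List α} {i j : ℕ} (d : α)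
    (hi : i < l.length) (hrest : rest.Sublist (l.drop (i + 1))) (hj : j ≤ i) :
    (l.getD i d :: rest).Sublist (l.drop j) := by
  rw [List.getD_eq_getElem _ _ hi]
  exact (hrest.cons_cons _).trans (List.drop_eq_getElem_cons hi ▸ List.drop_sublist_drop_left l hj)

theorem List.Sublist.exists_orderEmbedding_getD {α : Type*} {l' l : List α} (h : l'.Sublist l)
    (d : α) :
    ∃ f : ℕ ↪o ℕ, (∀ p, l'.getD p d = l.getD (f p) d) ∧ ∀ p < l'.length, f p < l.length := by
  obtain ⟨f, hf⟩ := List.sublist_iff_exists_orderEmbedding_getElem?_eq.1 h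
  refine ⟨f, fun p => by rw [List.getD_eq_getElem?_getD, List.getD_eq_getElem?_getD, hf], ?_⟩
  intro p hp
  by_contra! hfp
  have := hf p
  rw [List.getElem?_eq_none_iff.2 hfp, List.getElem?_eq_none_iff] at this
  omega

def IsPath {α : Type*} (r : α → α → Prop) (c : List α) (s t : α) : Prop :=
  c.head? = some s ∧ c.getLast? = some t ∧ c.IsChain r

namespace IsPath

variable {α β : Type*} {r : α → α → Prop} {c : List α} {s t : α}

theorem eq_cons (h : IsPath r c s t) : c = s :: c.tail := by
  cases c with
  | nil => simp [IsPath] at h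
  | cons x c => simpa using h.1

theorem singleton (r : α → α → Prop) (s : α) : IsPath r [s] s s :=
  ⟨rfl, rfl, List.isChain_singleton s⟩

theorem cons {s' : α} (h : IsPath r c s t) (hs : r s' s) : IsPath r (s' :: c) s' t := by
  obtain ⟨hhead, hlast, hchain⟩ := h
  cases c with
  | nil => simp at hhead
  | cons x c =>
    obtain rfl : x = s := by simpa using hhead
    exact ⟨rfl, by rwa [List.getLast?_cons_cons], List.isChain_cons_cons.2 ⟨hs, hchain⟩⟩

theorem of_cons_cons {x y : α} {l : List α} (h : IsPath r (x :: y :: l) s t) :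
    r x y ∧ IsPath r (y :: l) y t :=
  ⟨(List.isChain_cons_cons.1 h.2.2).1, rfl, by rw [← List.getLast?_cons_cons (a := x)]; exact h.2.1,
    (List.isChain_cons_cons.1 h.2.2).2⟩

theorem map {r' : β → β → Prop} (f : α → β) (hf : ∀ a ∈ c, ∀ b ∈ c, r a b → r' (f a) (f b))
    (h : IsPath r c s t) : IsPath r' (c.map f) (f s) (f t) :=
  ⟨by simp [h.1], by simp [h.2.1],
    (List.isChain_map f).2 (h.2.2.imp_of_mem_imp fun a b ha hb => hf a ha b hb)⟩

theorem le_last [Preorder α] (hr : ∀ ⦃a b⦄, r a b → a ≤ b) (h : IsPath r c s t) {e : α}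
    (he : e ∈ c) : e ≤ t := by
  have hlast := h.2.1
  rw [List.getLast?_eq_some_getLast (List.ne_nil_of_mem he), Option.some_inj] at hlast
  exact hlast ▸ (List.isChain_iff_pairwise.1 (h.2.2.imp hr)).rel_getLast he

theorem exists_cons {s' : α} (h : IsPath r c s t) (hs : s' ≠ s → r s' s) :
    ∃ c', IsPath r c' s' t ∧ c' ⊆ s' :: c := by
  by_cases hss : s' = s
  · exact ⟨c, hss ▸ h, List.subset_cons_self _ _⟩
  · exact ⟨s' :: c, h.cons (hs hss), List.Subset.refl _⟩

end IsPath

theorem StepN.le {p q : ℕ × ℕ} (h : StepN p q) : p ≤ q := ⟨h.1, h.2.2.1⟩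

theorem StepN.add {p q : ℕ × ℕ} (h : StepN p q) (a : ℕ × ℕ) : StepN (p + a) (q + a) := by
  obtain ⟨h1, h2, h3, h4, hne⟩ := h
  refine ⟨?_, ?_, ?_, ?_, fun heq => hne (add_right_cancel heq)⟩ <;>
    simp only [Prod.fst_add, Prod.snd_add] <;> omega

theorem StepN.sum_lt {p q : ℕ × ℕ} (h : StepN p q) : p.1 + p.2 < q.1 + q.2 := by
  obtain ⟨h1, -, h3, -, hne⟩ := h
  have : p.1 ≠ q.1 ∨ p.2 ≠ q.2 := by
    by_contra! h
    exact hne (Prod.ext h.1 h.2)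
  omega

theorem IsPath.add {c : List (ℕ × ℕ)} {s t : ℕ × ℕ} (h : IsPath StepN c s t) (a : ℕ × ℕ) :
    IsPath StepN (c.map (· + a)) (s + a) (t + a) :=
  h.map _ fun _ _ _ _ hpq => hpq.add a

theorem exists_isPath_stepN (a b : ℕ) : ∃ c, IsPath StepN c (0, 0) (a, b) := by
  induction a with
  | zero =>
    induction b with
    | zero => exact ⟨_, IsPath.singleton _ _⟩
    | succ b ih =>
      obtain ⟨c, hc⟩ := ih
      exact ⟨_, (hc.add (0, 1)).cons (s' := (0, 0)) (by simp [StepN])⟩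
  | succ a ih =>
    obtain ⟨c, hc⟩ := ih
    exact ⟨_, (hc.add (1, 0)).cons (s' := (0, 0)) (by simp [StepN])⟩

section Coupling

variable {X : Type*} [MetricSpace X] [Inhabited X]

def CostLe (P Q : List X) (δ : ℝ) (c : List (ℕ × ℕ)) : Prop :=
  ∀ e ∈ c, dist (P.getD e.1 default) (Q.getD e.2 default) ≤ δ

theorem CostLe.mono {P Q : List X} {δ : ℝ} {c c' : List (ℕ × ℕ)} (h : CostLe P Q δ c)
    (hc : c' ⊆ c) : CostLe P Q δ c' :=
  fun e he => h e (hc he)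

theorem costL_le_iff {P Q : List X} {δ : ℝ} (hδ : 0 ≤ δ) (c : List (ℕ × ℕ)) :
    costL P Q c ≤ δ ↔ CostLe P Q δ c := by
  simp only [costL, List.foldr_max_le_iff, hδ, true_and, List.forall_mem_map, CostLe]

theorem costLe_costL (P Q : List X) (c : List (ℕ × ℕ)) : CostLe P Q (costL P Q c) c :=
  fun _ he => List.le_max_of_le' 0 (List.mem_map_of_mem he) le_rfl

theorem CostLe.cons {P Q : List X} {δ : ℝ} {c : List (ℕ × ℕ)} {e : ℕ × ℕ} (h : CostLe P Q δ c)
    (he : dist (P.getD e.1 default) (Q.getD e.2 default) ≤ δ) : CostLe P Q δ (e :: c) := by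
  intro e' he'
  rcases List.mem_cons.1 he' with rfl | he'
  exacts [he, h e' he']

theorem CostLe.shift_fst {P Q : List X} {δ : ℝ} {c : List (ℕ × ℕ)} (h : CostLe P Q δ c) (x : X) :
    CostLe (x :: P) Q δ (c.map (· + (1, 0))) := by
  intro e he
  obtain ⟨e, he', rfl⟩ := List.mem_map.1 he
  simpa using h e he'

theorem CostLe.shift_snd {P Q : List X} {δ : ℝ} {c : List (ℕ × ℕ)} (h : CostLe P Q δ c) (y : X) :
    CostLe P (y :: Q) δ (c.map (· + (0, 1))) := by
  intro e he
  obtain ⟨e, he', rfl⟩ := List.mem_map.1 he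
  simpa using h e he'

theorem finite_range_costL (P Q : List X) : (Set.range (costL P Q)).Finite := by
  refine (((P.finite_toSet.insert default).image2 dist (Q.finite_toSet.insert default)).insert
    0).subset ?_
  rintro _ ⟨c, rfl⟩
  rcases List.foldr_max_eq_or_mem (c.map fun e => dist (P.getD e.1 default) (Q.getD e.2 default))
    0 with h | h
  · exact Or.inl h
  · obtain ⟨e, -, he⟩ := List.mem_map.1 h
    rw [costL, ← he]
    exact Or.inr (Set.mem_image2_of_mem (P.getD_eq_default_or_mem e.1 default)
      (Q.getD_eq_default_or_mem e.2 default))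

theorem dFL_le {P Q : List X} {δ : ℝ} (hδ : 0 ≤ δ) {c : List (ℕ × ℕ)}
    (hc : IsPath StepN c (0, 0) (P.length - 1, Q.length - 1)) (h : CostLe P Q δ c) : dFL P Q ≤ δ :=
  csInf_le_of_le ⟨0, by rintro _ ⟨c, -, rfl⟩; exact List.le_foldr_max _ _⟩ ⟨c, hc, rfl⟩
    ((costL_le_iff hδ c).2 h)

theorem exists_coupling_of_dFL_le {P Q : List X} {δ : ℝ} (h : dFL P Q ≤ δ) :
    ∃ c, IsPath StepN c (0, 0) (P.length - 1, Q.length - 1) ∧ CostLe P Q δ c := by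
  obtain ⟨c, hc⟩ := exists_isPath_stepN (P.length - 1) (Q.length - 1)
  have hne : {r | ∃ c, IsCouplingL P.length Q.length c ∧ costL P Q c = r}.Nonempty :=
    ⟨_, c, hc, rfl⟩
  obtain ⟨c, hc, hcost⟩ :=
    hne.csInf_mem ((finite_range_costL P Q).subset fun _ ⟨c, _, hr⟩ => ⟨c, hr⟩)
  exact ⟨c, hc, fun e he => (costLe_costL P Q c e he).trans (hcost.trans_le h)⟩

end Coupling

def Step3 (v w : ℕ × ℕ × ℕ) : Prop :=
  v.1 ≤ w.1 ∧ w.1 ≤ v.1 + 1 ∧ v.2.1 ≤ w.2.1 ∧ v.2.2 ≤ w.2.2 ∧ w.2.2 ≤ v.2.2 + 1 ∧ v ≠ w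

def midIncreaseCount (c : List (ℕ × ℕ × ℕ)) : ℕ :=
  (c.zip c.tail).countP fun e => decide (e.1.2.1 < e.2.2.1)

theorem midIncreaseCount_cons_cons (v w : ℕ × ℕ × ℕ) (l : List (ℕ × ℕ × ℕ)) :
    midIncreaseCount (v :: w :: l) =
      midIncreaseCount (w :: l) + if v.2.1 < w.2.1 then 1 else 0 := by
  simp [midIncreaseCount, List.countP_cons]

theorem midIncreaseCount_map (f : ℕ × ℕ × ℕ → ℕ × ℕ × ℕ)
    (hf : ∀ v w, (f v).2.1 < (f w).2.1 ↔ v.2.1 < w.2.1) (c : List (ℕ × ℕ × ℕ)) :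
    midIncreaseCount (c.map f) = midIncreaseCount c := by
  simp only [midIncreaseCount, ← List.map_tail, List.zip_map, List.countP_map]
  congr 1
  ext e
  simp [hf]

theorem IsPath.midIncreaseCount_add_le {c : List (ℕ × ℕ × ℕ)} {s t : ℕ × ℕ × ℕ}
    (h : IsPath Step3 c s t) : midIncreaseCount c + s.2.1 ≤ t.2.1 := by
  induction c generalizing s with
  | nil => simp [IsPath] at h
  | cons x l ih =>
    obtain rfl : x = s := by simpa using h.1
    cases l with
    | nil =>
      obtain rfl : x = t := by simpa using h.2.1
      simp [midIncreaseCount]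
    | cons y l =>
      obtain ⟨hxy, hy⟩ := h.of_cons_cons
      have := ih hy
      have := hxy.2.2.1
      rw [midIncreaseCount_cons_cons]
      split_ifs <;> omega

theorem Step3.map_succ {v w : ℕ × ℕ × ℕ} (h : Step3 v w) (f : ℕ ↪o ℕ) :
    Step3 (v.1 + 1, f v.2.1 + 1, v.2.2 + 1) (w.1 + 1, f w.2.1 + 1, w.2.2 + 1) := by
  obtain ⟨h1, h2, h3, h4, h5, hne⟩ := h
  rw [Ne, Prod.ext_iff, Prod.ext_iff] at hne
  have := f.monotone h3
  refine ⟨?_, ?_, ?_, ?_, ?_, ?_⟩ <;>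
    simp only [ne_eq, Prod.mk.injEq, add_left_inj, EmbeddingLike.apply_eq_iff_eq] <;> omega

def HasMergedPath (c1 c2 : List (ℕ × ℕ)) (s t : ℕ × ℕ × ℕ) : Prop :=
  ∃ M, IsPath Step3 M s t ∧ ∀ v ∈ M, (v.1, v.2.1) ∈ c1 ∧ (v.2.1, v.2.2) ∈ c2

theorem HasMergedPath.cons {c1 c2 xs ys : List (ℕ × ℕ)} {x y : ℕ × ℕ} {s t : ℕ × ℕ × ℕ}
    (h : HasMergedPath c1 c2 s t) (hxy : x.2 = y.1) (hs : Step3 (x.1, x.2, y.2) s)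
    (hc1 : c1 ⊆ x :: xs) (hc2 : c2 ⊆ y :: ys) :
    HasMergedPath (x :: xs) (y :: ys) (x.1, x.2, y.2) t := by
  obtain ⟨M, hM, hmem⟩ := h
  refine ⟨_, hM.cons hs, fun v hv => ?_⟩
  rcases List.mem_cons.1 hv with rfl | hv
  · simp [Prod.ext_iff, hxy]
  · exact ⟨hc1 (hmem v hv).1, hc2 (hmem v hv).2⟩

theorem hasMergedPath_singleton_cons {b : ℕ × ℕ} (x : ℕ × ℕ) (ys : List (ℕ × ℕ)) :
    ∀ y : ℕ × ℕ, IsPath StepN (y :: ys) y b → x.2 = y.1 → x.2 = b.1 →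
      HasMergedPath [x] (y :: ys) (x.1, x.2, y.2) (x.1, x.2, b.2) := by
  induction ys with
  | nil =>
    intro y hy hxy _
    obtain rfl : y = b := by simpa using hy.2.1
    refine ⟨_, IsPath.singleton _ _, fun v hv => ?_⟩
    obtain rfl := List.mem_singleton.1 hv
    simp [Prod.ext_iff, hxy]
  | cons y' ys ih =>
    intro y hy hxy hxb
    obtain ⟨hyy', hy'⟩ := hy.of_cons_cons
    have hy'b : y'.1 ≤ b.1 := (hy'.le_last (fun _ _ h => h.le) List.mem_cons_self).1
    have := hyy'.sum_lt
    obtain ⟨_, _, _, _, _⟩ := hyy'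
    refine (ih y' hy' (by omega) hxb).cons hxy ?_ (List.Subset.refl _)
      (List.subset_cons_self _ _)
    refine ⟨?_, ?_, ?_, ?_, ?_, ?_⟩ <;> simp [Prod.ext_iff] <;> omega

theorem hasMergedPath_cons_cons {a b : ℕ × ℕ} (xs : List (ℕ × ℕ)) :
    ∀ (x : ℕ × ℕ) (ys : List (ℕ × ℕ)) (y : ℕ × ℕ), IsPath StepN (x :: xs) x a →
      IsPath StepN (y :: ys) y b → x.2 = y.1 → a.2 = b.1 →
      HasMergedPath (x :: xs) (y :: ys) (x.1, x.2, y.2) (a.1, a.2, b.2) := by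
  induction xs with
  | nil =>
    intro x ys y hx hy hxy hab
    obtain rfl : x = a := by simpa using hx.2.1
    exact hasMergedPath_singleton_cons x ys y hy hxy hab
  | cons x' xs ihx =>
    intro x ys
    induction ys with
    | nil =>
      intro y hx hy hxy hab
      obtain rfl : y = b := by simpa using hy.2.1
      obtain ⟨hxx', hx'⟩ := hx.of_cons_cons
      have hx'a : x'.2 ≤ a.2 := (hx'.le_last (fun _ _ h => h.le) List.mem_cons_self).2
      have := hxx'.sum_lt
      obtain ⟨_, _, _, _, _⟩ := hxx'
      refine (ihx x' [] y hx' hy (by omega) hab).cons hxy ?_ (List.subset_cons_self _ _)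
        (List.Subset.refl _)
      refine ⟨?_, ?_, ?_, ?_, ?_, ?_⟩ <;> simp [Prod.ext_iff] <;> omega
    | cons y' ys ihy =>
      intro y hx hy hxy hab
      obtain ⟨hxx', hx'⟩ := hx.of_cons_cons
      obtain ⟨hyy', hy'⟩ := hy.of_cons_cons
      have := hxx'.sum_lt
      have := hyy'.sum_lt
      obtain ⟨_, _, _, _, _⟩ := hxx'
      obtain ⟨_, _, _, _, _⟩ := hyy'
      by_cases hx2 : x'.2 = x.2
      · refine (ihx x' (y' :: ys) y hx' hy (by omega) hab).cons hxy ?_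
          (List.subset_cons_self _ _) (List.Subset.refl _)
        refine ⟨?_, ?_, ?_, ?_, ?_, ?_⟩ <;> simp [Prod.ext_iff] <;> omega
      by_cases hy1 : y'.1 = y.1
      · refine (ihy y' hx hy' (by omega) hab).cons hxy ?_ (List.Subset.refl _)
          (List.subset_cons_self _ _)
        refine ⟨?_, ?_, ?_, ?_, ?_, ?_⟩ <;> simp [Prod.ext_iff] <;> omega
      · refine (ihx x' ys y' hx' hy' (by omega) hab).cons hxy ?_
          (List.subset_cons_self _ _) (List.subset_cons_self _ _)
        refine ⟨?_, ?_, ?_, ?_, ?_, ?_⟩ <;> simp [Prod.ext_iff] <;> omega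

theorem IsPath.hasMergedPath {c1 c2 : List (ℕ × ℕ)} {x y a b : ℕ × ℕ} (h1 : IsPath StepN c1 x a)
    (h2 : IsPath StepN c2 y b) (hxy : x.2 = y.1) (hab : a.2 = b.1) :
    HasMergedPath c1 c2 (x.1, x.2, y.2) (a.1, a.2, b.2) := by
  rw [h1.eq_cons, h2.eq_cons] at *
  exact hasMergedPath_cons_cons _ x _ y h1 h2 hxy hab

section Simplification

variable {X : Type*} [MetricSpace X] [Inhabited X]

theorem exists_configPath_of_simplification {A B A' : List X} {δ1 δ3 : ℝ} (hB : B ≠ [])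
    (hsub : A'.Sublist A) (hA' : A' ≠ []) (hd1 : dFL A A' ≤ δ1) (hd3 : dFL A' B ≤ δ3) :
    ∃ p₀ p₁ c, IsPath (Edge3 A B δ1 δ3) c (1, p₀, 1) (A.length, p₁, B.length) ∧
      (∀ v ∈ c, Ok3 A B δ1 δ3 v) ∧ midIncreaseCount c ≤ A'.length - 1 := by
  obtain ⟨c1, hc1, hcost1⟩ := exists_coupling_of_dFL_le hd1
  obtain ⟨c2, hc2, hcost2⟩ := exists_coupling_of_dFL_le hd3
  obtain ⟨f, hgetD, hfA⟩ := hsub.exists_orderEmbedding_getD default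
  obtain ⟨M, hM, hmem⟩ := IsPath.hasMergedPath hc1 hc2 rfl rfl
  have hA'len : 0 < A'.length := List.length_pos_iff.2 hA'
  have hAlen : A'.length ≤ A.length := hsub.length_le
  have hBlen : 0 < B.length := List.length_pos_iff.2 hB
  -- back to 1-based indices, with positions in `A'` replaced by positions in `A`
  set g : ℕ × ℕ × ℕ → ℕ × ℕ × ℕ := fun v => (v.1 + 1, f v.2.1 + 1, v.2.2 + 1) with hg
  have hok : ∀ v ∈ M, Ok3 A B δ1 δ3 (g v) := by
    intro v hv
    have h1 := hc1.le_last (fun _ _ h => h.le) (hmem v hv).1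
    have h2 := hc2.le_last (fun _ _ h => h.le) (hmem v hv).2
    simp only [Prod.mk_le_mk] at h1 h2
    have := hfA v.2.1 (by omega)
    simp only [Ok3, hg, Nat.add_sub_cancel, ← hgetD]
    exact ⟨by omega, by omega, by omega, by omega, by omega, by omega, hcost1 _ (hmem v hv).1,
      hcost2 _ (hmem v hv).2⟩
  have hlast : g (A.length - 1, A'.length - 1, B.length - 1)
      = (A.length, f (A'.length - 1) + 1, B.length) := by
    simp only [hg, Prod.mk.injEq, true_and]
    omega
  refine ⟨f 0 + 1, f (A'.length - 1) + 1, M.map g, ?_, ?_, ?_⟩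
  · rw [← hlast]
    exact hM.map g fun v hv w hw hvw => ⟨hok v hv, hok w hw, hvw.map_succ f⟩
  · intro u hu
    obtain ⟨v, hv, rfl⟩ := List.mem_map.1 hu
    exact hok v hv
  · rw [midIncreaseCount_map g (fun v w => by simp [hg]) M]
    simpa using hM.midIncreaseCount_add_le

/-- The part of a configuration path from `v = (i, p, j)` to `t` yields the simplification
`A_p :: rest` of `A` from position `p` on, with `n + 1` vertices, together with its couplings to
`A` and `B` started at (0-based) positions `i` and `j`. -/
def SuffixSimplification (A B : List X) (δ1 δ3 : ℝ) (v t : ℕ × ℕ × ℕ) (n : ℕ) : Prop :=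
  ∃ (rest : List X) (c1 c2 : List (ℕ × ℕ)), rest.Sublist (A.drop v.2.1) ∧ rest.length = n ∧
    IsPath StepN c1 (v.1 - 1, 0) (t.1 - 1, n) ∧
    CostLe A (A.getD (v.2.1 - 1) default :: rest) δ1 c1 ∧
    IsPath StepN c2 (0, v.2.2 - 1) (n, t.2.2 - 1) ∧
    CostLe (A.getD (v.2.1 - 1) default :: rest) B δ3 c2

variable {A B : List X} {δ1 δ3 : ℝ}

theorem suffixSimplification_self {v : ℕ × ℕ × ℕ} (hv : Ok3 A B δ1 δ3 v) :
    SuffixSimplification A B δ1 δ3 v v 0 :=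
  ⟨[], _, _, List.nil_sublist _, rfl, IsPath.singleton _ _,
    CostLe.cons (fun _ h => absurd h List.not_mem_nil) hv.2.2.2.2.2.2.1, IsPath.singleton _ _,
    CostLe.cons (fun _ h => absurd h List.not_mem_nil) hv.2.2.2.2.2.2.2⟩

theorem SuffixSimplification.cons_of_eq {v w t : ℕ × ℕ × ℕ} {n : ℕ}
    (h : SuffixSimplification A B δ1 δ3 w t n) (hvw : Edge3 A B δ1 δ3 v w) (hp : v.2.1 = w.2.1) :
    SuffixSimplification A B δ1 δ3 v t n := by
  obtain ⟨rest, c1, c2, hsub, hlen, hc1, hcost1, hc2, hcost2⟩ := h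
  obtain ⟨hv, ⟨hw1, -⟩, e1, e2, -, e4, e5, -⟩ := hvw
  obtain ⟨c1', hc1', hsub1⟩ := hc1.exists_cons (s' := (v.1 - 1, 0))
    fun hne => ⟨by dsimp only; omega, by dsimp only; omega, le_rfl, by dsimp only; omega, hne⟩
  obtain ⟨c2', hc2', hsub2⟩ := hc2.exists_cons (s' := (0, v.2.2 - 1))
    fun hne => ⟨le_rfl, by dsimp only; omega, by dsimp only; omega, by dsimp only; omega, hne⟩
  rw [← hp] at hsub hcost1 hcost2
  exact ⟨rest, c1', c2', hsub, hlen, hc1',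
    (hcost1.cons (e := (v.1 - 1, 0)) hv.2.2.2.2.2.2.1).mono hsub1, hc2',
    (hcost2.cons (e := (0, v.2.2 - 1)) hv.2.2.2.2.2.2.2).mono hsub2⟩

theorem SuffixSimplification.cons_of_lt {v w t : ℕ × ℕ × ℕ} {n : ℕ}
    (h : SuffixSimplification A B δ1 δ3 w t n) (hvw : Edge3 A B δ1 δ3 v w) (hp : v.2.1 < w.2.1) :
    SuffixSimplification A B δ1 δ3 v t (n + 1) := by
  obtain ⟨rest, c1, c2, hsub, hlen, hc1, hcost1, hc2, hcost2⟩ := h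
  obtain ⟨hv, ⟨hw1, -, hw3, hw4, -⟩, e1, e2, -, e4, e5, -⟩ := hvw
  refine ⟨_, _, _, List.getD_cons_sublist_drop default (by omega) ?_ (by omega), by simp [hlen],
    (hc1.add (0, 1)).cons (s' := (v.1 - 1, 0)) ?_, (hcost1.shift_snd _).cons hv.2.2.2.2.2.2.1,
    (hc2.add (1, 0)).cons (s' := (0, v.2.2 - 1)) ?_, (hcost2.shift_fst _).cons hv.2.2.2.2.2.2.2⟩
  · rwa [Nat.sub_add_cancel hw3]
  · refine ⟨?_, ?_, ?_, ?_, ?_⟩ <;> simp <;> omega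
  · refine ⟨?_, ?_, ?_, ?_, ?_⟩ <;> simp <;> omega

theorem suffixSimplification_of_isPath (ws : List (ℕ × ℕ × ℕ)) :
    ∀ v t, IsPath (Edge3 A B δ1 δ3) (v :: ws) v t → Ok3 A B δ1 δ3 v →
      SuffixSimplification A B δ1 δ3 v t (midIncreaseCount (v :: ws)) := by
  induction ws with
  | nil =>
    intro v t hc hv
    obtain rfl : v = t := by simpa using hc.2.1
    exact suffixSimplification_self hv
  | cons w ws ih =>
    intro v t hc _
    obtain ⟨hvw, hw⟩ := hc.of_cons_cons
    have h := ih w t hw hvw.2.1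
    rw [midIncreaseCount_cons_cons]
    split_ifs with hp
    · exact h.cons_of_lt hvw hp
    · exact h.cons_of_eq hvw (by have := hvw.2.2.2.2.1; omega)

theorem exists_simplification_of_configPath (h1 : 0 ≤ δ1) (h3 : 0 ≤ δ3)
    {c : List (ℕ × ℕ × ℕ)} {p₀ p₁ : ℕ}
    (hc : IsPath (Edge3 A B δ1 δ3) c (1, p₀, 1) (A.length, p₁, B.length))
    (hok : ∀ v ∈ c, Ok3 A B δ1 δ3 v) :
    ∃ A' : List X, A'.Sublist A ∧ A' ≠ [] ∧ A'.length = midIncreaseCount c + 1 ∧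
      dFL A A' ≤ δ1 ∧ dFL A' B ≤ δ3 := by
  have hv := hok _ (List.mem_of_mem_head? hc.1)
  obtain ⟨ws, rfl⟩ : ∃ ws, c = (1, p₀, 1) :: ws := ⟨_, hc.eq_cons⟩
  obtain ⟨rest, c1, c2, hsub, hlen, hc1, hcost1, hc2, hcost2⟩ :=
    suffixSimplification_of_isPath _ _ _ hc hv
  refine ⟨_, List.getD_cons_sublist_drop default ?_ ?_ (Nat.zero_le _), List.cons_ne_nil _ _,
    by simp [hlen], dFL_le h1 (by simpa [hlen] using hc1) hcost1,
    dFL_le h3 (by simpa [hlen] using hc2) hcost2⟩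
  · dsimp only
    simp only [Ok3] at hv
    omega
  · simpa [Ok3, Nat.sub_add_cancel hv.2.2.1] using hsub

end Simplification

theorem one_sided_cps3f_graph_correct_general {X : Type*} [MetricSpace X] [Inhabited X]
    (A B : List X) (hB : B ≠ [])
    (δ1 δ3 : ℝ) (h1 : 0 < δ1) (h3 : 0 < δ3) (k : ℕ) (hk : 1 ≤ k) :
    (∃ A' : List X, A'.Sublist A ∧ A' ≠ [] ∧ A'.length ≤ k ∧
      dFL A A' ≤ δ1 ∧ dFL A' B ≤ δ3) ↔
    (∃ p₀ p₁ : ℕ, ∃ c : List (ℕ × ℕ × ℕ),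
      c.head? = some (1, p₀, 1) ∧
      c.getLast? = some (A.length, p₁, B.length) ∧
      c.Chain' (Edge3 A B δ1 δ3) ∧
      (∀ v ∈ c, Ok3 A B δ1 δ3 v) ∧
      (c.zip c.tail).countP (fun e => decide (e.1.2.1 < e.2.2.1)) ≤ k - 1) := by
  constructor
  · rintro ⟨A', hsub, hA', hlen, hd1, hd3⟩
    obtain ⟨p₀, p₁, c, hc, hok, hcount⟩ := exists_configPath_of_simplification hB hsub hA' hd1 hd3
    exact ⟨p₀, p₁, c, hc.1, hc.2.1, hc.2.2, hok, hcount.trans (by omega)⟩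
  · rintro ⟨p₀, p₁, c, hhead, hlast, hchain, hok, hcount⟩
    obtain ⟨A', hsub, hA', hlen, hd1, hd3⟩ :=
      exists_simplification_of_configPath h1.le h3.le ⟨hhead, hlast, hchain⟩ hok
    have : midIncreaseCount c ≤ k - 1 := hcount
    exact ⟨A', hsub, hA', by omega, hd1, hd3⟩

/-- Correctness of the 1-sided CPS-3F graph formulation: a simplification `A'`
of `A` with at most `k` vertices, `d_dF(A,A') ≤ δ1` and `d_dF(A',B) ≤ δ3`
exists iff some final configuration `(m,p₁,n)` is reachable from some starting
configuration `(1,p₀,1)` by a path whose second coordinate strictly increases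
at most `k-1` times. -/
theorem one_sided_cps3f_graph_correct {X : Type*} [MetricSpace X] [Inhabited X]
    (A B : List X) (hA : A ≠ []) (hB : B ≠ [])
    (δ1 δ3 : ℝ) (h1 : 0 < δ1) (h3 : 0 < δ3) (k : ℕ) (hk : 1 ≤ k) :
    (∃ A' : List X, A'.Sublist A ∧ A' ≠ [] ∧ A'.length ≤ k ∧
      dFL A A' ≤ δ1 ∧ dFL A' B ≤ δ3) ↔
    (∃ p₀ p₁ : ℕ, ∃ c : List (ℕ × ℕ × ℕ),
      c.head? = some (1, p₀, 1) ∧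
      c.getLast? = some (A.length, p₁, B.length) ∧
      c.Chain' (Edge3 A B δ1 δ3) ∧
      (∀ v ∈ c, Ok3 A B δ1 δ3 v) ∧
      (c.zip c.tail).countP (fun e => decide (e.1.2.1 < e.2.2.1)) ≤ k - 1) :=
  one_sided_cps3f_graph_correct_general A B hB δ1 δ3 h1 h3 k hk
end
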